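/- Let h₀₂, h₁₃, γ₁, γ₂, P₀ > 0 with (h₁₃√γ₁ + h₂₃√γ₂)² ≤ min(h₀₁², h₀₂²). Define C(x) = (1/2)log₂(1+x), C_up(P₀) = (h₁₃√γ₁ + h₂₃√γ₂)²·P₀/(2 ln 2), and C_DDF(P₀) = min((1/2)C(2h₀₂²P₀), (1/2)C(2(h₁₃√γ₁+h₂₃√γ₂)²P₀)). Then lim_{P₀→0⁺} C_DDF(P₀)/C_up(P₀) = 1. -/

import Mathlib

noncomputable def gaussC (x : ℝ) : ℝ := (1 / 2) * Real.logb 2 (1 + x)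

/-! Write `s = (h₁₃√γ₁ + h₂₃√γ₂)²`. Since `s ≤ h₀₂²` and `C` is monotone, the minimum defining
`C_DDF(P₀)` is `½ C(2sP₀)`, and the ratio to `C_up(P₀)` is exactly `ln(1 + x) / x` at `x = 2sP₀`,
which tends to `1` because `ln` has derivative `1` at `1`. -/

open Filter Topology

lemma tendsto_log_one_add_div_self :
    Tendsto (fun x : ℝ => Real.log (1 + x) / x) (𝓝[≠] 0) (𝓝 1) := by
  simpa [div_eq_inv_mul] using
    hasDerivAt_iff_tendsto_slope_zero.mp (Real.hasDerivAt_log one_ne_zero)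

lemma gaussC_monotoneOn : MonotoneOn gaussC (Set.Ioi (-1)) := by
  intro x hx y _ hxy
  have : 0 < 1 + x := by linarith [Set.mem_Ioi.mp hx]
  unfold gaussC
  gcongr
  norm_num

lemma tendsto_gaussC_div :
    Tendsto (fun x => gaussC x / (x / (2 * Real.log 2))) (𝓝[≠] 0) (𝓝 1) := by
  refine tendsto_log_one_add_div_self.congr fun x => ?_
  have hlog2 : Real.log 2 ≠ 0 := (Real.log_pos one_lt_two).ne'
  simp only [gaussC, Real.logb]
  field_simp

theorem ddf_low_snr_optimal_general (h01 h02 h13 h23 γ1 γ2 : ℝ)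
    (hh13 : 0 < h13) (hh23 : 0 < h23)
    (hγ1 : 0 < γ1)
    (hcond : (h13 * Real.sqrt γ1 + h23 * Real.sqrt γ2) ^ 2 ≤ min (h01 ^ 2) (h02 ^ 2)) :
    Filter.Tendsto
      (fun P0 : ℝ =>
        (min ((1 / 2) * gaussC (2 * h02 ^ 2 * P0))
            ((1 / 2) * gaussC (2 * (h13 * Real.sqrt γ1 + h23 * Real.sqrt γ2) ^ 2 * P0))) /
          ((h13 * Real.sqrt γ1 + h23 * Real.sqrt γ2) ^ 2 * P0 / (2 * Real.log 2)))
      (nhdsWithin 0 (Set.Ioi 0)) (nhds 1) := by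
  set s := (h13 * Real.sqrt γ1 + h23 * Real.sqrt γ2) ^ 2
  have hs : 0 < s := pow_pos (add_pos_of_pos_of_nonneg (mul_pos hh13 (Real.sqrt_pos.2 hγ1))
    (mul_nonneg hh23.le (Real.sqrt_nonneg _))) 2
  have hs02 : s ≤ h02 ^ 2 := hcond.trans (min_le_right _ _)
  have hscale : Tendsto (fun P0 => 2 * s * P0) (𝓝[>] 0) (𝓝[>] 0) := by
    simpa using TendstoNhdsWithinIoi.const_mul (by positivity : 0 < 2 * s)
      (tendsto_id (x := 𝓝[>] (0 : ℝ)))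
  refine ((tendsto_gaussC_div.mono_left (nhdsWithin_mono _ fun x hx => ne_of_gt hx)).comp
    hscale).congr' ?_
  filter_upwards [self_mem_nhdsWithin] with P0 (hP0 : 0 < P0)
  have hsP0 : 2 * s * P0 ≤ 2 * h02 ^ 2 * P0 := by gcongr
  have hle : (1 / 2) * gaussC (2 * s * P0) ≤ (1 / 2) * gaussC (2 * h02 ^ 2 * P0) := by
    have hpos : 0 < 2 * s * P0 := by positivity
    gcongr
    exact gaussC_monotoneOn (Set.mem_Ioi.2 (by linarith)) (Set.mem_Ioi.2 (by linarith)) hsP0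
  rw [Function.comp_apply, min_eq_right hle]
  field_simp

/-- At low SNR, under the channel condition, the ratio of the DDF rate to the cut-set
upper bound tends to 1 as `P₀ → 0⁺`. -/
theorem ddf_low_snr_optimal (h01 h02 h13 h23 γ1 γ2 : ℝ)
    (hh01 : 0 < h01) (hh02 : 0 < h02) (hh13 : 0 < h13) (hh23 : 0 < h23)
    (hγ1 : 0 < γ1) (hγ2 : 0 < γ2)
    (hcond : (h13 * Real.sqrt γ1 + h23 * Real.sqrt γ2) ^ 2 ≤ min (h01 ^ 2) (h02 ^ 2)) :
    Filter.Tendsto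
      (fun P0 : ℝ =>
        (min ((1 / 2) * gaussC (2 * h02 ^ 2 * P0))
            ((1 / 2) * gaussC (2 * (h13 * Real.sqrt γ1 + h23 * Real.sqrt γ2) ^ 2 * P0))) /
          ((h13 * Real.sqrt γ1 + h23 * Real.sqrt γ2) ^ 2 * P0 / (2 * Real.log 2)))
      (nhdsWithin 0 (Set.Ioi 0)) (nhds 1) :=
  ddf_low_snr_optimal_general h01 h02 h13 h23 γ1 γ2 hh13 hh23 hγ1 hcond
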